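/- Under the hypotheses that ssol(I,S) ≠ ∅ and Ĵ is an approximate conditional solution of I w.r.t. S^∃ (the setting without its EGDs Σ_E), and Q' agrees with Q on instances satisfying Σ_E and returns all tuples otherwise, it holds that ccert(Ĵ,Q') ⊆ scert(I,Q,S). -/

import Mathlib

namespace DE

abbrev Var := ℕ

inductive Term (C : Type) where
  | const : C → Term C
  | null : ℕ → Term C

structure Atom (R C : Type) where
  rel : R
  args : List (Var ⊕ C)

structure Fact (R C : Type) where
  rel : R
  args : List (Term C)

abbrev Instance (R C : Type) := Set (Fact R C)

def termOf {C : Type} (h : Var → Term C) : Var ⊕ C → Term C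
  | Sum.inl v => h v
  | Sum.inr c => Term.const c

def applyAtom {R C : Type} (h : Var → Term C) (a : Atom R C) : Fact R C :=
  ⟨a.rel, a.args.map (termOf h)⟩

/-- `h` maps every atom of `as` into the instance `I`. -/
def holdsBody {R C : Type} (I : Instance R C) (h : Var → Term C)
    (as : List (Atom R C)) : Prop :=
  ∀ a ∈ as, applyAtom h a ∈ I

/-- A tuple-generating dependency. -/
structure TGD (R C : Type) where
  body : List (Atom R C)
  head : List (Atom R C)
  frontier : List Var
  exvars : List Var

def varsOf {R C : Type} (as : List (Atom R C)) : Set Var :=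
  {v | ∃ a ∈ as, (Sum.inl v : Var ⊕ C) ∈ a.args}

/-- Well-formedness of a TGD: frontier variables occur in the body, existential
variables do not, and every head variable is a frontier or existential variable. -/
def TGD.wf {R C : Type} (ρ : TGD R C) : Prop :=
  (∀ v ∈ ρ.frontier, v ∈ varsOf ρ.body) ∧
  (∀ z ∈ ρ.exvars, z ∉ varsOf ρ.body) ∧
  (∀ v ∈ varsOf ρ.head, v ∈ ρ.frontier ∨ v ∈ ρ.exvars)

/-- Satisfaction of a TGD by an instance. -/
def satTGD {R C : Type} (I : Instance R C) (ρ : TGD R C) : Prop :=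
  ∀ h : Var → Term C, holdsBody I h ρ.body →
    ∃ h' : Var → Term C, (∀ v ∈ varsOf ρ.body, h' v = h v) ∧ holdsBody I h' ρ.head

/-- An equality-generating dependency. -/
structure EGD (R C : Type) where
  body : List (Atom R C)
  lhs : Var
  rhs : Var

def satEGD {R C : Type} (I : Instance R C) (η : EGD R C) : Prop :=
  ∀ h : Var → Term C, holdsBody I h η.body → h η.lhs = h η.rhs

/-- An ex-choice: given a TGD and a tuple of constants for its frontier,
a constant for each existential variable. -/
abbrev ExChoice (R C : Type) := TGD R C → List C → Var → C

def constHom {C : Type} (h : Var → C) : Var → Term C := fun v => Term.const (h v)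

/-- `I` satisfies all ground versions of the TGD `ρ` that are coherent with `γ`. -/
def satTGDcoh {R C : Type} (I : Instance R C) (γ : ExChoice R C) (ρ : TGD R C) : Prop :=
  ∀ h : Var → C, (∀ z ∈ ρ.exvars, h z = γ ρ (ρ.frontier.map h) z) →
    holdsBody I (constHom h) ρ.body → holdsBody I (constHom h) ρ.head

/-- A data exchange setting: source-to-target TGDs, target TGDs, target EGDs. -/
structure Setting (R C : Type) where
  sigmaST : List (TGD R C)
  sigmaT : List (TGD R C)
  sigmaE : List (EGD R C)

def Setting.wf {R C : Type} (S : Setting R C) : Prop :=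
  ∀ ρ ∈ S.sigmaST ++ S.sigmaT, ρ.wf

/-- Classical solution: `I ∪ J` satisfies `Σst` and `J` satisfies `Σt`. -/
def classicalSolution {R C : Type} (S : Setting R C) (I J : Instance R C) : Prop :=
  J.Finite ∧ (∀ ρ ∈ S.sigmaST, satTGD (I ∪ J) ρ) ∧
    (∀ ρ ∈ S.sigmaT, satTGD J ρ) ∧ (∀ η ∈ S.sigmaE, satEGD J η)

def supportedWith {R C : Type} (S : Setting R C) (γ : ExChoice R C)
    (I J : Instance R C) : Prop :=
  (∀ ρ ∈ S.sigmaST, satTGDcoh (I ∪ J) γ ρ) ∧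
    (∀ ρ ∈ S.sigmaT, satTGDcoh J γ ρ) ∧ (∀ η ∈ S.sigmaE, satEGD J η)

/-- Supported solution: for some ex-choice `γ`, `I ∪ J` satisfies `Σst^γ`,
`J` satisfies `Σt^γ`, and no proper subset of `J` does. -/
def supportedSolution {R C : Type} (S : Setting R C) (I J : Instance R C) : Prop :=
  J.Finite ∧ ∃ γ : ExChoice R C, supportedWith S γ I J ∧
    ∀ J' : Instance R C, J' ⊂ J → ¬ supportedWith S γ I J'

/-- An instance without labeled nulls (a database). -/
def nullFree {R C : Type} (I : Instance R C) : Prop :=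
  ∀ f ∈ I, ∀ t ∈ f.args, ∃ c : C, t = Term.const c

end DE

namespace DE

def constsOfAtoms {R C : Type} (as : List (Atom R C)) : Set C :=
  {c | ∃ a ∈ as, (Sum.inr c : Var ⊕ C) ∈ a.args}

def constsOfTGD {R C : Type} (ρ : TGD R C) : Set C :=
  constsOfAtoms ρ.body ∪ constsOfAtoms ρ.head

def constsOfEGD {R C : Type} (η : EGD R C) : Set C := constsOfAtoms η.body

def constsOfSetting {R C : Type} (S : Setting R C) : Set C :=
  {c | ∃ ρ ∈ S.sigmaST ++ S.sigmaT, c ∈ constsOfTGD ρ} ∪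
    {c | ∃ η ∈ S.sigmaE, c ∈ constsOfEGD η}

def constsOfInstance {R C : Type} (I : Instance R C) : Set C :=
  {c | ∃ f ∈ I, Term.const c ∈ f.args}

/-- Replace each labeled null by a constant according to `r`. -/
def renameTerm {C : Type} (r : ℕ → C) : Term C → Term C
  | Term.null n => Term.const (r n)
  | Term.const c => Term.const c

def renameFact {R C : Type} (r : ℕ → C) (f : Fact R C) : Fact R C :=
  ⟨f.rel, f.args.map (renameTerm r)⟩

/-- Active domain of an instance. -/
def adom {R C : Type} (J : Instance R C) : Set (Term C) := {t | ∃ f ∈ J, t ∈ f.args}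

def mapFact {R C : Type} (h : Term C → Term C) (f : Fact R C) : Fact R C :=
  ⟨f.rel, f.args.map h⟩

end DE

namespace DE

/-- Conditions: Boolean combinations of equalities between terms. -/
inductive Cond (C : Type) where
  | tru : Cond C
  | eq : Term C → Term C → Cond C
  | and : Cond C → Cond C → Cond C
  | or : Cond C → Cond C → Cond C
  | not : Cond C → Cond C

/-- A valuation maps nulls to constants (and is the identity on constants). -/
abbrev Valuation (C : Type) := ℕ → C

def valTerm {C : Type} (ν : Valuation C) : Term C → C
  | Term.const c => c
  | Term.null n => ν n

def satCond {C : Type} (ν : Valuation C) : Cond C → Prop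
  | Cond.tru => True
  | Cond.eq t u => valTerm ν t = valTerm ν u
  | Cond.and a b => satCond ν a ∧ satCond ν b
  | Cond.or a b => satCond ν a ∨ satCond ν b
  | Cond.not a => ¬ satCond ν a

/-- A conditional instance: a set of conditional facts. -/
abbrev CInstance (R C : Type) := Set (Fact R C × Cond C)

def valFact {R C : Type} (ν : Valuation C) (f : Fact R C) : Fact R C :=
  ⟨f.rel, f.args.map (fun t => Term.const (valTerm ν t))⟩

/-- The possible world of a conditional instance under a valuation. -/
def world {R C : Type} (ν : Valuation C) (CJ : CInstance R C) : Instance R C :=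
  {g | ∃ p ∈ CJ, satCond ν p.2 ∧ g = valFact ν p.1}

def pw {R C : Type} (CJ : CInstance R C) : Set (Instance R C) :=
  {W | ∃ ν : Valuation C, W = world ν CJ}

/-- Conditional certain answers (for an abstract query). -/
def ccert {R C : Type} (CJ : CInstance R C)
    (Q : Instance R C → Set (List (Term C))) : Set (List (Term C)) :=
  {t | ∀ W ∈ pw CJ, t ∈ Q W}

def satAllEGDs {R C : Type} (es : List (EGD R C)) (J : Instance R C) : Prop :=
  ∀ η ∈ es, satEGD J η

/-- The setting obtained by deleting all EGDs. -/
def dropEGDs {R C : Type} (S : Setting R C) : Setting R C := ⟨S.sigmaST, S.sigmaT, []⟩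

def settingTerms {R C : Type} (S : Setting R C) : Set (Term C) :=
  {t | ∃ c ∈ constsOfSetting S, t = Term.const c}

end DE

namespace DE

variable {R C : Type}

theorem satEGD.of_subset {I J : Instance R C} {η : EGD R C} (hIJ : I ⊆ J)
    (hJ : satEGD J η) : satEGD I η :=
  fun h hb => hJ h fun a ha => hIJ (hb a ha)

theorem supportedWith_iff_dropEGDs {S : Setting R C} {γ : ExChoice R C} {I J : Instance R C} :
    supportedWith S γ I J ↔ supportedWith (dropEGDs S) γ I J ∧ satAllEGDs S.sigmaE J :=
  ⟨fun ⟨hst, ht, hE⟩ => ⟨⟨hst, ht, by simp [dropEGDs]⟩, hE⟩,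
    fun ⟨⟨hst, ht, _⟩, hE⟩ => ⟨hst, ht, hE⟩⟩

/-- Since EGDs are inherited by subinstances, minimality with and without `Σ_E` agree. -/
theorem supportedSolution_iff_dropEGDs {S : Setting R C} {I J : Instance R C} :
    supportedSolution S I J ↔ supportedSolution (dropEGDs S) I J ∧ satAllEGDs S.sigmaE J := by
  constructor
  · rintro ⟨hfin, γ, hsup, hmin⟩
    obtain ⟨hsup', hE⟩ := supportedWith_iff_dropEGDs.mp hsup
    refine ⟨⟨hfin, γ, hsup', fun J' hJ' hsupJ' => hmin J' hJ' ?_⟩, hE⟩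
    exact supportedWith_iff_dropEGDs.mpr
      ⟨hsupJ', fun η hη => (hE η hη).of_subset hJ'.subset⟩
  · rintro ⟨⟨hfin, γ, hsup, hmin⟩, hE⟩
    exact ⟨hfin, γ, supportedWith_iff_dropEGDs.mpr ⟨hsup, hE⟩,
      fun J' hJ' hsupJ' => hmin J' hJ' (supportedWith_iff_dropEGDs.mp hsupJ').1⟩

theorem ccert_subset_of_eqOn_satAllEGDs {CJ : CInstance R C} {es : List (EGD R C)}
    {Q Q' : Instance R C → Set (List (Term C))}
    (hQ : ∀ J, satAllEGDs es J → Q' J = Q J) :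
    ccert CJ Q' ⊆ {t | ∀ W ∈ pw CJ, satAllEGDs es W → t ∈ Q W} :=
  fun _ ht W hW hE => hQ W hE ▸ ht W hW

end DE

theorem ccert_rewritten_subset_scert_general {R C : Type}
    (S : DE.Setting R C) (I : DE.Instance R C) (CJ : DE.CInstance R C)
    (Q Q' : DE.Instance R C → Set (List (DE.Term C)))
    (happrox : ∀ J : DE.Instance R C,
      DE.supportedSolution (DE.dropEGDs S) I J → J ∈ DE.pw CJ)
    (hQeq : ∀ J : DE.Instance R C, DE.satAllEGDs S.sigmaE J → Q' J = Q J) :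
    DE.ccert CJ Q' ⊆
      {t | ∀ J : DE.Instance R C, DE.supportedSolution S I J → t ∈ Q J} := by
  intro t ht J hJ
  obtain ⟨hJ', hE⟩ := DE.supportedSolution_iff_dropEGDs.mp hJ
  exact DE.ccert_subset_of_eqOn_satAllEGDs hQeq ht J (happrox J hJ') hE

/-- under the same hypotheses, the conditional certain answers of
the rewritten query `Q'` are contained in the supported certain answers of `Q`. -/
theorem ccert_rewritten_subset_scert {R C : Type}
    (S : DE.Setting R C) (I : DE.Instance R C) (CJ : DE.CInstance R C)
    (Q Q' : DE.Instance R C → Set (List (DE.Term C))) (k : ℕ)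
    (Qconsts : Set (DE.Term C))
    (hne : ∃ J : DE.Instance R C, DE.supportedSolution S I J)
    (happrox : ∀ J : DE.Instance R C,
      DE.supportedSolution (DE.dropEGDs S) I J → J ∈ DE.pw CJ)
    (hQeq : ∀ J : DE.Instance R C, DE.satAllEGDs S.sigmaE J → Q' J = Q J)
    (hQall : ∀ J : DE.Instance R C, ¬ DE.satAllEGDs S.sigmaE J →
      Q' J = {t | t.length = k ∧
        ∀ x ∈ t, x ∈ DE.adom J ∪ DE.settingTerms S ∪ Qconsts}) :
    DE.ccert CJ Q' ⊆
      {t | ∀ J : DE.Instance R C, DE.supportedSolution S I J → t ∈ Q J} :=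
  ccert_rewritten_subset_scert_general S I CJ Q Q' happrox hQeq
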